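/- arXiv:2406.06856 — 6 statements merged into one kernel-verified Lean document; each statement's English description precedes it below -/
import Mathlib

section
/- Let ι and Π be finite nonempty types, let φ : Π → (ι → ℝ) assign a vector to each element of Π, let π⋆ ∈ Π, and let D : Π → ℝ satisfy 0 < D(π⋆) ≤ D(π) for every π ∈ Π. Then inf over strictly positive probability vectors λ on ι of max_{π ∈ Π} (Σ_i (φ(π⋆)(i) − φ(π)(i))²/λ(i)) / D(π) ≤ 4 · inf over strictly positive probability vectors λ on ι of max_{π ∈ Π} (Σ_i φ(π)(i)²/λ(i)) / D(π). -/
/-- Comparing the difference-based experimental-design complexity with the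
individual-visitation complexity: with `π⋆` a minimizer of `D` (the gap-denominator),
the infimum over strictly positive probability vectors `λ` of
`max_π ‖φ(π⋆) − φ(π)‖²_λ / D(π)` is at most `4` times the corresponding infimum of
`max_π ‖φ(π)‖²_λ / D(π)`. -/
theorem stmt_1 {ι Γ : Type*} [Fintype ι] [Nonempty ι] [Fintype Γ] [Nonempty Γ]
    (φ : Γ → ι → ℝ) (πs : Γ) (D : Γ → ℝ)
    (hDpos : 0 < D πs) (hDle : ∀ π, D πs ≤ D π) :
    sInf {x : ℝ | ∃ lam : ι → ℝ, (∀ i, 0 < lam i) ∧ (∑ i, lam i = 1) ∧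
        x = ⨆ π : Γ, (∑ i, (φ πs i - φ π i) ^ 2 / lam i) / D π} ≤
      4 * sInf {x : ℝ | ∃ lam : ι → ℝ, (∀ i, 0 < lam i) ∧ (∑ i, lam i = 1) ∧
        x = ⨆ π : Γ, (∑ i, (φ π i) ^ 2 / lam i) / D π} := by
  classical
  have hDpos' : ∀ π, 0 < D π := fun π => hDpos.trans_le (hDle π)
  set S := {x : ℝ | ∃ lam : ι → ℝ, (∀ i, 0 < lam i) ∧ (∑ i, lam i = 1) ∧
      x = ⨆ π : Γ, (∑ i, (φ πs i - φ π i) ^ 2 / lam i) / D π} with hS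
  set T := {x : ℝ | ∃ lam : ι → ℝ, (∀ i, 0 < lam i) ∧ (∑ i, lam i = 1) ∧
      x = ⨆ π : Γ, (∑ i, (φ π i) ^ 2 / lam i) / D π} with hT
  -- pointwise bound
  have key : ∀ lam : ι → ℝ, (∀ i, 0 < lam i) →
      (⨆ π : Γ, (∑ i, (φ πs i - φ π i) ^ 2 / lam i) / D π) ≤
      4 * (⨆ π : Γ, (∑ i, (φ π i) ^ 2 / lam i) / D π) := by
    intro lam hlam
    set B : Γ → ℝ := fun π => (∑ i, (φ π i) ^ 2 / lam i) / D π with hB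
    have hsumnn : ∀ π : Γ, (0:ℝ) ≤ ∑ i, (φ π i) ^ 2 / lam i := fun π =>
      Finset.sum_nonneg fun i _ => div_nonneg (sq_nonneg _) (hlam i).le
    have hbdd : BddAbove (Set.range B) := (Set.finite_range B).bddAbove
    have hBsup : ∀ π, B π ≤ ⨆ π, B π := fun π => le_ciSup hbdd π
    apply ciSup_le
    intro π
    have h1 : (∑ i, (φ πs i - φ π i) ^ 2 / lam i) ≤
        2 * (∑ i, (φ πs i) ^ 2 / lam i) + 2 * (∑ i, (φ π i) ^ 2 / lam i) := by
      calc (∑ i, (φ πs i - φ π i) ^ 2 / lam i)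
          ≤ ∑ i, (2 * (φ πs i) ^ 2 + 2 * (φ π i) ^ 2) / lam i := by
            apply Finset.sum_le_sum
            intro i _
            apply div_le_div_of_nonneg_right _ (hlam i).le
            nlinarith [sq_nonneg (φ πs i + φ π i)]
        _ = 2 * (∑ i, (φ πs i) ^ 2 / lam i) + 2 * (∑ i, (φ π i) ^ 2 / lam i) := by
            rw [Finset.mul_sum, Finset.mul_sum, ← Finset.sum_add_distrib]
            exact Finset.sum_congr rfl fun i _ => by ring
    have h2 : (∑ i, (φ πs i - φ π i) ^ 2 / lam i) / D π ≤
        (2 * (∑ i, (φ πs i) ^ 2 / lam i) + 2 * (∑ i, (φ π i) ^ 2 / lam i)) / D π :=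
      div_le_div_of_nonneg_right h1 (hDpos' π).le
    have h3 : (∑ i, (φ πs i) ^ 2 / lam i) / D π ≤ B πs :=
      div_le_div_of_nonneg_left (hsumnn πs) hDpos (hDle π)
    have h4 : B πs ≤ ⨆ π, B π := hBsup πs
    have h5 : B π ≤ ⨆ π, B π := hBsup π
    rw [add_div, mul_div_assoc, mul_div_assoc] at h2
    linarith
  -- the uniform probability vector
  have hcard : (0:ℝ) < (Fintype.card ι : ℝ) := by
    exact_mod_cast Fintype.card_pos
  set u : ι → ℝ := fun _ => (Fintype.card ι : ℝ)⁻¹ with hu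
  have hupos : ∀ i, 0 < u i := fun i => inv_pos.mpr hcard
  have husum : (∑ _i : ι, u _i) = 1 := by
    simp [hu, Finset.sum_const, mul_inv_cancel₀ (ne_of_gt hcard)]
  have hTne : T.Nonempty := ⟨_, u, hupos, husum, rfl⟩
  have hSbdd : BddBelow S := by
    refine ⟨0, fun x hx => ?_⟩
    obtain ⟨lam, hlam, -, rfl⟩ := hx
    set A : Γ → ℝ := fun π => (∑ i, (φ πs i - φ π i) ^ 2 / lam i) / D π with hA
    have hbdd : BddAbove (Set.range A) := (Set.finite_range A).bddAbove
    refine le_ciSup_of_le hbdd (Classical.arbitrary Γ) ?_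
    exact div_nonneg (Finset.sum_nonneg fun i _ => div_nonneg (sq_nonneg _) (hlam i).le)
      (hDpos' _).le
  have hmain : sInf S / 4 ≤ sInf T := by
    apply le_csInf hTne
    intro y hy
    obtain ⟨lam, hlam, hsum, rfl⟩ := hy
    have hSmem : (⨆ π : Γ, (∑ i, (φ πs i - φ π i) ^ 2 / lam i) / D π) ∈ S :=
      ⟨lam, hlam, hsum, rfl⟩
    have := csInf_le hSbdd hSmem
    have := key lam hlam
    linarith
  linarith
end

section
/- Let 0 < ε ≤ 1/6, let S = {s₂, s₃, s₄} and A = {a₁, a₂, a₃}, let w : S → ℝ be the probability vector w(s₂) = 1−3ε, w(s₃) = 2ε, w(s₄) = ε, let r : S × A → ℝ satisfy r(s₃,a₁) = 1, r(s₄,a₂) = 1 and r(s,a) = 0 otherwise, and let π₁, π₂ : S → A with π₁(s) = a₁ for all s, π₂(s₂) = a₁, π₂(s₃) = π₂(s₄) = a₂. Then: (i) Σ_{s ∈ S} w(s)·(r(s,π₂(s)) − r(s,π₁(s)))² = 3ε, so with H = 2 the quantity H·U(π₂,π₁)/ε² equals 3H/ε = 6/ε; (ii) defining φ₂^{π} (s,a)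 := w(s)·1{π(s) = a} for π ∈ {π₁,π₂} and φ₁^{π} := the point mass at (s₁,a₁), for every strictly positive probability vector λ and each h ∈ {1,2}, max_{π ∈ {π₁,π₂}} Σ_{(s,a)} φ_h^{π}(s,a)²/λ(s,a) ≥ 1, hence Σ_{h=1}^{2} inf_λ max_π (Σ_{(s,a)} φ_h^{π}(s,a)²/λ(s,a))/ε² ≥ 2/ε². -/
lemma key_csq (lam f : Fin 4 × Fin 3 → ℝ) (hpos : ∀ x, 0 < lam x)
    (hsum : ∑ x, lam x = 1) (hfsum : ∑ x, f x = 1) :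
    1 ≤ ∑ x, f x ^ 2 / lam x := by
  have := Finset.sq_sum_div_le_sum_sq_div Finset.univ f (fun x _ => hpos x)
  rwa [hsum, hfsum, one_pow, div_one] at this

/-- Computation on the motivating MDP of Figure 1 (states `s₁,s₂,s₃,s₄` encoded as
`0,1,2,3 : Fin 4`, actions `a₁,a₂,a₃` encoded as `0,1,2 : Fin 3`, horizon `H = 2`):
(i) the reference-policy variance term equals `3ε`, so `H·U(π₂,π₁)/ε² = 6/ε`;
(ii) each state-action visitation vector `φ_h^π` has `‖φ_h^π‖²_λ ≥ 1` for every
strictly positive probability vector `λ`, hence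
`∑_{h=1}^{2} inf_λ max_π ‖φ_h^π‖²_λ / ε² ≥ 2/ε²`. -/
theorem stmt_5 (ε : ℝ) (hε : 0 < ε) (hε' : ε ≤ 1 / 6)
    (w : Fin 4 → ℝ) (hw : w = ![0, 1 - 3 * ε, 2 * ε, ε])
    (r : Fin 4 × Fin 3 → ℝ)
    (hr : r = fun x => if x = (2, 0) then 1 else if x = (3, 1) then 1 else 0)
    (π1 π2 : Fin 4 → Fin 3) (hπ1 : π1 = fun _ => 0) (hπ2 : π2 = ![0, 0, 1, 1])
    (φ : Fin 2 → (Fin 4 → Fin 3) → Fin 4 × Fin 3 → ℝ)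
    (hφ : φ = fun h π x => if h = 0 then (if x = ((0 : Fin 4), (0 : Fin 3)) then 1 else 0)
        else w x.1 * (if π x.1 = x.2 then 1 else 0)) :
    (∑ s, w s * (r (s, π2 s) - r (s, π1 s)) ^ 2 = 3 * ε) ∧
    (2 * (∑ s, w s * (r (s, π2 s) - r (s, π1 s)) ^ 2) / ε ^ 2 = 6 / ε) ∧
    (∀ h : Fin 2, ∀ lam : Fin 4 × Fin 3 → ℝ, (∀ x, 0 < lam x) → (∑ x, lam x = 1) →
      1 ≤ max (∑ x, (φ h π1 x) ^ 2 / lam x) (∑ x, (φ h π2 x) ^ 2 / lam x)) ∧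
    (2 / ε ^ 2 ≤ ∑ h : Fin 2, sInf {y : ℝ | ∃ lam : Fin 4 × Fin 3 → ℝ,
      (∀ x, 0 < lam x) ∧ (∑ x, lam x = 1) ∧
      y = max (∑ x, (φ h π1 x) ^ 2 / lam x) (∑ x, (φ h π2 x) ^ 2 / lam x) / ε ^ 2}) := by
  subst hw hr hπ1 hπ2 hφ
  have hε0 : ε ≠ 0 := ne_of_gt hε
  have part1 : (∑ s : Fin 4, (![0, 1 - 3 * ε, 2 * ε, ε]) s *
      ((fun x : Fin 4 × Fin 3 => if x = (2, 0) then (1:ℝ) else if x = (3, 1) then 1 else 0)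
        (s, (![0, 0, 1, 1]) s)
      - (fun x : Fin 4 × Fin 3 => if x = (2, 0) then (1:ℝ) else if x = (3, 1) then 1 else 0)
        (s, (fun _ => (0:Fin 3)) s)) ^ 2 = 3 * ε) := by
    simp [Fin.sum_univ_four]
    ring
  refine ⟨part1, ?_, ?_, ?_⟩
  · rw [part1]; field_simp; ring
  · intro h lam hpos hsum
    refine le_trans ?_ (le_max_left _ _)
    apply key_csq lam _ hpos hsum
    fin_cases h
    · simp [Fintype.sum_prod_type, Fin.sum_univ_four, Fin.sum_univ_three]
    · simp [Fintype.sum_prod_type, Fin.sum_univ_four, Fin.sum_univ_three]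
      ring
  · have hbound : ∀ h : Fin 2, (1:ℝ) / ε ^ 2 ≤ sInf {y : ℝ | ∃ lam : Fin 4 × Fin 3 → ℝ,
        (∀ x, 0 < lam x) ∧ (∑ x, lam x = 1) ∧
        y = max (∑ x, ((fun h π (x : Fin 4 × Fin 3) => if h = 0 then
            (if x = ((0 : Fin 4), (0 : Fin 3)) then (1:ℝ) else 0)
          else (![0, 1 - 3 * ε, 2 * ε, ε]) x.1 * (if π x.1 = x.2 then 1 else 0))
            h (fun _ => (0:Fin 3)) x) ^ 2 / lam x)
          (∑ x, ((fun h π (x : Fin 4 × Fin 3) => if h = 0 then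
            (if x = ((0 : Fin 4), (0 : Fin 3)) then (1:ℝ) else 0)
          else (![0, 1 - 3 * ε, 2 * ε, ε]) x.1 * (if π x.1 = x.2 then 1 else 0))
            h (![0, 0, 1, 1]) x) ^ 2 / lam x) / ε ^ 2} := by
      intro h
      apply le_csInf
      · exact ⟨_, ⟨fun _ => (1:ℝ)/12, fun x => by norm_num, by
          simp [Fintype.sum_prod_type, Fin.sum_univ_four, Fin.sum_univ_three], rfl⟩⟩
      · rintro y ⟨lam, hpos, hsum, rfl⟩
        apply div_le_div_of_nonneg_right ?_ (by positivity)
        refine le_trans ?_ (le_max_left _ _)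
        apply key_csq lam _ hpos hsum
        fin_cases h
        · simp [Fintype.sum_prod_type, Fin.sum_univ_four, Fin.sum_univ_three]
        · simp [Fintype.sum_prod_type, Fin.sum_univ_four, Fin.sum_univ_three]
          ring
    calc (2:ℝ) / ε ^ 2 = ∑ _h : Fin 2, 1 / ε ^ 2 := by
          simp; ring
      _ ≤ _ := Finset.sum_le_sum fun h _ => hbound h
end

section
/- Let Π be a finite nonempty type, D : Π → ℝ, π⋆ ∈ Π a maximizer of D, and Δ_min ≥ 0 a real number such that Δ_min ≤ D(π⋆) − D(π) for every π with D(π) < D(π⋆). Define Δ(π) := max{D(π⋆) − D(π), Δ_min}. Let ε ≥ 0 and suppose D̂ : Π → ℝ satisfies |D̂(π) − D(π)| ≤ (1/3)·max{ε, Δ(π)} for all π ∈ Π. Then any π̂ ∈ Π maximizing D̂ satisfies D(π⋆) − D(π̂) ≤ ε; in fact D(π⋆) − D(π̂) ≤ 2ε/3. -/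
/-- Sufficient condition for ε-optimality of the policy-difference estimator:
if every `D̂(π)` is within `(1/3)·max{ε, Δ(π)}` of `D(π)`, where
`Δ(π) = max{D(π⋆) − D(π), Δ_min}`, then any maximizer `π̂` of `D̂` satisfies
`D(π⋆) − D(π̂) ≤ 2ε/3 ≤ ε`. -/
theorem stmt_6 {Γ : Type*} [Fintype Γ] [Nonempty Γ]
    (D : Γ → ℝ) (πs : Γ) (hπs : ∀ π, D π ≤ D πs)
    (Δmin : ℝ) (hΔmin0 : 0 ≤ Δmin)
    (hΔmin : ∀ π, D π < D πs → Δmin ≤ D πs - D π)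
    (Δ : Γ → ℝ) (hΔ : ∀ π, Δ π = max (D πs - D π) Δmin)
    (ε : ℝ) (hε : 0 ≤ ε)
    (Dh : Γ → ℝ) (hDh : ∀ π, |Dh π - D π| ≤ (1 / 3) * max ε (Δ π))
    (πh : Γ) (hπh : ∀ π, Dh π ≤ Dh πh) :
    D πs - D πh ≤ ε ∧ D πs - D πh ≤ 2 * ε / 3 := by
  set g : ℝ := D πs - D πh with hg
  rcases eq_or_lt_of_le (hπs πh) with heq | hlt
  · constructor <;> simp [hg, heq] <;> linarith
  · have hgpos : 0 < g := by simp [hg]; linarith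
    have hmin : Δmin ≤ g := hΔmin πh hlt
    have hΔh : Δ πh = g := by rw [hΔ]; exact max_eq_left hmin
    have hΔs : Δ πs = Δmin := by rw [hΔ]; simpa using hΔmin0
    have h1 := abs_le.mp (hDh πh)
    have h2 := abs_le.mp (hDh πs)
    have h3 := hπh πs
    have hkey : g ≤ (1/3) * max ε (Δ πs) + (1/3) * max ε (Δ πh) := by
      have : D πs ≤ D πh + (1/3) * max ε (Δ πs) + (1/3) * max ε (Δ πh) := by
        linarith [h1.1, h2.2]
      linarith
    rw [hΔh, hΔs] at hkey
    have hmax : max ε Δmin ≤ max ε g := max_le_max le_rfl hmin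
    have hkey2 : g ≤ (2/3) * max ε g := by linarith
    rcases le_total g ε with hle | hle
    · constructor
      · exact hle
      · rw [max_eq_left hle] at hkey2; linarith
    · rw [max_eq_right hle] at hkey2; constructor <;> linarith
end

section
/- Let k ≥ 1 and S ≥ 1, let B₁, …, B_k be S × S real matrices with entries in [0,1] and row sums at most 1, let M₂, …, M_{k+1} be diagonal S × S matrices with diagonal entries in {0,1}, let w ∈ ℝ^S be a nonnegative vector, and define w_j := B_{j−1} ⋯ B₁ w (with w₁ = w). Suppose ε > 0 is such that for every j ∈ {1,…,k} and every coordinate s with (M_{j+1})_{ss} = 0, one has (B_j w_j)_s ≤ ε. Then ‖(M_{k+1} B_k M_k B_{k−1} ⋯ M₂ B₁ − B_k B_{k−1} ⋯ B₁) w‖₂ ≤ k · S · ε. -/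
/-- The effect of truncation on state-visitation vectors: with `w_j = B_{j−1}⋯B₁ w`
(the untruncated visitations) and `u_j = M_j B_{j−1} ⋯ M₂ B₁ w` (the truncated ones),
if each `B_j` is substochastic, the `M_j` are diagonal `{0,1}` matrices, `w ≥ 0`,
and `(B_j w_j)_s ≤ ε` on every coordinate `s` zeroed out by `M_{j+1}`,
then `‖u_{k+1} − w_{k+1}‖₂ ≤ k·S·ε`. -/
theorem stmt_10 {S : ℕ} (hS : 1 ≤ S) (k : ℕ) (hk : 1 ≤ k)
    (B : ℕ → Matrix (Fin S) (Fin S) ℝ)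
    (hB0 : ∀ j, 1 ≤ j → j ≤ k → ∀ r c, 0 ≤ B j r c)
    (hB1 : ∀ j, 1 ≤ j → j ≤ k → ∀ r c, B j r c ≤ 1)
    (hBrow : ∀ j, 1 ≤ j → j ≤ k → ∀ r, ∑ c, B j r c ≤ 1)
    (M : ℕ → Matrix (Fin S) (Fin S) ℝ)
    (hMdiag : ∀ j, 2 ≤ j → j ≤ k + 1 → ∀ r c, r ≠ c → M j r c = 0)
    (hM01 : ∀ j, 2 ≤ j → j ≤ k + 1 → ∀ r, M j r r = 0 ∨ M j r r = 1)
    (w : Fin S → ℝ) (hw : ∀ s, 0 ≤ w s)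
    (wv u : ℕ → Fin S → ℝ)
    (hwv1 : wv 1 = w) (hu1 : u 1 = w)
    (hwv : ∀ j, 1 ≤ j → wv (j + 1) = (B j).mulVec (wv j))
    (hu : ∀ j, 1 ≤ j → u (j + 1) = (M (j + 1)).mulVec ((B j).mulVec (u j)))
    (ε : ℝ) (hε : 0 < ε)
    (hcond : ∀ j, 1 ≤ j → j ≤ k → ∀ s, M (j + 1) s s = 0 →
      ((B j).mulVec (wv j)) s ≤ ε) :
    Real.sqrt (∑ s, (u (k + 1) s - wv (k + 1) s) ^ 2) ≤ k * S * ε := by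
  have mv : ∀ (A : Matrix (Fin S) (Fin S) ℝ) (v : Fin S → ℝ) (s : Fin S),
      A.mulVec v s = ∑ c, A s c * v c := fun A v s => rfl
  have key : ∀ j, 1 ≤ j → j ≤ k + 1 →
      (∀ s, 0 ≤ u j s) ∧ (∀ s, u j s ≤ wv j s) ∧
      (∀ s, wv j s - u j s ≤ ((j : ℝ) - 1) * ε) := by
    intro j hj1
    induction j, hj1 using Nat.le_induction with
    | base =>
      intro _
      refine ⟨by simpa [hu1] using hw, by simp [hu1, hwv1], by simp [hu1, hwv1]⟩
    | succ j hj ih =>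
      intro hjk1
      have hjk : j ≤ k := by omega
      obtain ⟨hu0, hule, hdiff⟩ := ih (by omega)
      have hM2 : 2 ≤ j + 1 := by omega
      have hMk : j + 1 ≤ k + 1 := by omega
      have hBu0 : ∀ s, 0 ≤ (B j).mulVec (u j) s := by
        intro s
        rw [mv]
        exact Finset.sum_nonneg fun c _ => mul_nonneg (hB0 j hj hjk s c) (hu0 c)
      have humul : ∀ s, u (j+1) s = M (j+1) s s * ((B j).mulVec (u j)) s := by
        intro s
        rw [hu j hj, mv]
        rw [Finset.sum_eq_single s]
        · intro c _ hc
          rw [hMdiag (j+1) hM2 hMk s c (Ne.symm hc)]; ring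
        · intro h; exact absurd (Finset.mem_univ s) h
      have hBle : ∀ s, (B j).mulVec (u j) s ≤ (B j).mulVec (wv j) s := by
        intro s
        rw [mv, mv]
        exact Finset.sum_le_sum fun c _ =>
          mul_le_mul_of_nonneg_left (hule c) (hB0 j hj hjk s c)
      have hwv' : wv (j+1) = (B j).mulVec (wv j) := hwv j hj
      have hC0 : (0:ℝ) ≤ ((j:ℝ) - 1) * ε := by
        have : (1:ℝ) ≤ (j:ℝ) := by exact_mod_cast hj
        nlinarith
      refine ⟨?_, ?_, ?_⟩
      · intro s
        rw [humul s]
        rcases hM01 (j+1) hM2 hMk s with h | h <;> rw [h] <;>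
          simp [hBu0 s]
      · intro s
        rw [humul s, hwv']
        calc M (j+1) s s * ((B j).mulVec (u j)) s
            ≤ 1 * ((B j).mulVec (u j)) s := by
              rcases hM01 (j+1) hM2 hMk s with h | h <;> rw [h] <;>
                simp [hBu0 s]
          _ = (B j).mulVec (u j) s := one_mul _
          _ ≤ (B j).mulVec (wv j) s := hBle s
      · intro s
        rw [humul s, hwv']
        push_cast
        rcases hM01 (j+1) hM2 hMk s with h | h
        · rw [h]
          have h1 := hcond j hj hjk s h
          have : (1:ℝ) ≤ (j:ℝ) := by exact_mod_cast hj
          nlinarith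
        · rw [h, one_mul]
          have hsum : (B j).mulVec (wv j) s - (B j).mulVec (u j) s
              = ∑ c, B j s c * (wv j c - u j c) := by
            rw [mv, mv, ← Finset.sum_sub_distrib]
            exact Finset.sum_congr rfl fun c _ => by ring
          rw [hsum]
          have : ∑ c, B j s c * (wv j c - u j c)
              ≤ ∑ c, B j s c * (((j:ℝ) - 1) * ε) :=
            Finset.sum_le_sum fun c _ =>
              mul_le_mul_of_nonneg_left (hdiff c) (hB0 j hj hjk s c)
          have hsum2 : ∑ c, B j s c * (((j:ℝ) - 1) * ε)
              = (∑ c, B j s c) * (((j:ℝ) - 1) * ε) := by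
            rw [Finset.sum_mul]
          have hrow := hBrow j hj hjk s
          have h2 : (∑ c, B j s c) * (((j:ℝ) - 1) * ε) ≤ ((j:ℝ) - 1) * ε := by
            nlinarith
          nlinarith [this, hsum2 ▸ this]
  obtain ⟨hu0, hule, hdiff⟩ := key (k+1) (by omega) le_rfl
  have hdbound : ∀ s : Fin S, (u (k+1) s - wv (k+1) s) ^ 2 ≤ ((k:ℝ) * ε) ^ 2 := by
    intro s
    have h1 : wv (k+1) s - u (k+1) s ≤ (k:ℝ) * ε := by
      have := hdiff s
      push_cast at this
      linarith
    have h2 : 0 ≤ wv (k+1) s - u (k+1) s := by linarith [hule s]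
    have : (u (k+1) s - wv (k+1) s) ^ 2 = (wv (k+1) s - u (k+1) s) ^ 2 := by ring
    rw [this]
    nlinarith
  have hsumle : ∑ s, (u (k+1) s - wv (k+1) s) ^ 2 ≤ ((k:ℝ) * S * ε) ^ 2 := by
    calc ∑ s, (u (k+1) s - wv (k+1) s) ^ 2
        ≤ ∑ _s : Fin S, ((k:ℝ) * ε) ^ 2 := Finset.sum_le_sum fun s _ => hdbound s
      _ = (S : ℝ) * ((k:ℝ) * ε) ^ 2 := by simp [mul_comm]
      _ ≤ ((k:ℝ) * S * ε) ^ 2 := by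
          have hS1 : (1:ℝ) ≤ (S:ℝ) := by exact_mod_cast hS
          nlinarith [sq_nonneg ((k:ℝ)*ε), hε.le, Nat.cast_nonneg (α := ℝ) k]
  have hkSε : 0 ≤ (k:ℝ) * S * ε :=
    mul_nonneg (mul_nonneg (Nat.cast_nonneg _) (Nat.cast_nonneg _)) hε.le
  calc Real.sqrt (∑ s, (u (k + 1) s - wv (k + 1) s) ^ 2)
      ≤ Real.sqrt (((k:ℝ) * S * ε) ^ 2) := Real.sqrt_le_sqrt hsumle
    _ = (k:ℝ) * S * ε := Real.sqrt_sq hkSε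
end

section
/- Let C and A be finite nonempty types, let Π be a finite nonempty set of functions C → A with π⋆ ∈ Π, let μ : C → ℝ be a probability vector, and let r : C × A → ℝ satisfy 0 ≤ r(c,a) ≤ 1 for all (c,a). Then max_{π ∈ Π} Σ_{c ∈ C} μ(c) · (r(c, π(c)) − r(c, π⋆(c)))² ≤ inf over families p = (p_c)_{c ∈ C} of strictly positive probability vectors on A of max_{π ∈ Π} Σ_{c ∈ C} Σ_{a ∈ A} μ(c) · (1{π(c) = a} − 1{π⋆(c) = a})² / p_c(a). -/
/-- In contextual bandits the reward-difference (reference-policy) term is dominated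
by the visitation-difference experimental-design complexity:
`max_π Σ_c μ(c)(r(c,π(c)) − r(c,π⋆(c)))² ≤
 inf_p max_π Σ_c Σ_a μ(c)(1{π(c)=a} − 1{π⋆(c)=a})²/p_c(a)`. -/
theorem stmt_13 {C A : Type*} [Fintype C] [Fintype A] [Nonempty C] [Nonempty A]
    [DecidableEq A]
    (Pol : Finset (C → A)) (hPol : Pol.Nonempty)
    (πs : C → A) (hπs : πs ∈ Pol)
    (μ : C → ℝ) (hμ0 : ∀ c, 0 ≤ μ c) (hμ1 : ∑ c, μ c = 1)
    (r : C → A → ℝ) (hr : ∀ c a, 0 ≤ r c a ∧ r c a ≤ 1) :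
    Pol.sup' hPol (fun π => ∑ c, μ c * (r c (π c) - r c (πs c)) ^ 2) ≤
      sInf {x : ℝ | ∃ p : C → A → ℝ, (∀ c a, 0 < p c a) ∧ (∀ c, ∑ a, p c a = 1) ∧
        x = Pol.sup' hPol (fun π =>
          ∑ c, ∑ a, μ c * ((if π c = a then (1 : ℝ) else 0)
            - (if πs c = a then (1 : ℝ) else 0)) ^ 2 / p c a)} := by
  apply le_csInf
  · refine ⟨_, fun c a => (1 : ℝ) / Fintype.card A, fun c a => ?_, fun c => ?_, rfl⟩
    · positivity
    · simp [Finset.sum_div]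
  · rintro x ⟨p, hp0, hp1, rfl⟩
    apply Finset.sup'_le
    intro π hπ
    refine le_trans ?_ (Finset.le_sup' _ hπ)
    apply Finset.sum_le_sum
    intro c _
    -- termwise inequality
    have hterm_nonneg : ∀ a ∈ Finset.univ, 0 ≤ μ c * ((if π c = a then (1 : ℝ) else 0)
        - (if πs c = a then (1 : ℝ) else 0)) ^ 2 / p c a := by
      intro a _
      have := (hp0 c a).le; have hμc := hμ0 c
      positivity
    by_cases h : π c = πs c
    · have : μ c * (r c (π c) - r c (πs c)) ^ 2 = 0 := by rw [h]; ring
      rw [this]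
      exact Finset.sum_nonneg hterm_nonneg
    · have hple : p c (π c) ≤ 1 := by
        rw [← hp1 c]
        exact Finset.single_le_sum (fun a _ => (hp0 c a).le) (Finset.mem_univ _)
      have hsingle := Finset.single_le_sum hterm_nonneg (Finset.mem_univ (π c))
      refine le_trans ?_ hsingle
      rw [if_pos rfl, if_neg (fun hh => h hh.symm)]
      have hd2 : (r c (π c) - r c (πs c)) ^ 2 ≤ 1 := by
        have h1 := hr c (π c); have h2 := hr c (πs c)
        nlinarith [h1.1, h1.2, h2.1, h2.2]
      have h1 : μ c * (r c (π c) - r c (πs c)) ^ 2 ≤ μ c := by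
        nlinarith [hμ0 c]
      have h2 : μ c ≤ μ c / p c (π c) := by
        rw [le_div_iff₀ (hp0 c (π c))]
        nlinarith [hμ0 c]
      calc μ c * (r c (π c) - r c (πs c)) ^ 2 ≤ μ c := h1
        _ ≤ μ c / p c (π c) := h2
        _ = μ c * (1 - 0) ^ 2 / p c (π c) := by ring
end

section
/- Let S and A be finite nonempty types, H ≥ 1, let Π be a finite nonempty set of time-indexed deterministic policies π : {1,…,H} × S → A with π⋆ ∈ Π, and for each h ∈ {1,…,H} let w_h : S → ℝ be a probability vector. Let Q : Π × {1,…,H} × S × A → ℝ satisfy 0 ≤ Q(π,h,s,a) ≤ H for all arguments, and let D : Π → ℝ with D(π) > 0 for all π. Then max_{π ∈ Π} (H · Σ_{h=1}^{H} Σ_{s ∈ S} w_h(s) · (Q(π,h,s,π(h,s)) − Q(π,h,s,π⋆(h,s)))²) / D(π) ≤ 2H⁴ · Σ_{h=1}^{H} inf over families p = (p_s)_{s ∈ S} of strictly positive probability vectors on A of max_{π ∈ Π} (Σ_{s ∈ S} Σ_{a ∈ A} w_h(s) · (1{π(h,s) = a} − 1{π⋆(h,s) = a})² / p_s(a)) /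 D(π). -/
/-- The comparison lemma for MDPs with action-independent transitions: the
reference-policy variance term `H·U(π,π⋆)/D(π)` (built from `Q`-functions bounded in
`[0,H]` and the common state-visitation vectors `w_h`) is at most
`2H⁴ · ∑_h inf_p max_π ‖φ⋆_h − φ^π_h‖²_{Λ_h(p)⁻¹} / D(π)`. -/
theorem stmt_14 {S A : Type*} [Fintype S] [Fintype A] [Nonempty S] [Nonempty A]
    [DecidableEq A]
    (H : ℕ) (hH : 1 ≤ H)
    (Pol : Finset (Fin H → S → A)) (hPol : Pol.Nonempty)
    (πs : Fin H → S → A) (hπs : πs ∈ Pol)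
    (w : Fin H → S → ℝ) (hw0 : ∀ h s, 0 ≤ w h s) (hw1 : ∀ h, ∑ s, w h s = 1)
    (Q : (Fin H → S → A) → Fin H → S → A → ℝ)
    (hQ : ∀ π h s a, 0 ≤ Q π h s a ∧ Q π h s a ≤ (H : ℝ))
    (D : (Fin H → S → A) → ℝ) (hD : ∀ π, 0 < D π) :
    Pol.sup' hPol (fun π =>
        ((H : ℝ) * ∑ h, ∑ s, w h s * (Q π h s (π h s) - Q π h s (πs h s)) ^ 2) / D π) ≤
      2 * (H : ℝ) ^ 4 * ∑ h, sInf {x : ℝ | ∃ p : S → A → ℝ,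
        (∀ s a, 0 < p s a) ∧ (∀ s, ∑ a, p s a = 1) ∧
        x = Pol.sup' hPol (fun π =>
          (∑ s, ∑ a, w h s * ((if π h s = a then (1 : ℝ) else 0)
            - (if πs h s = a then (1 : ℝ) else 0)) ^ 2 / p s a) / D π)} := by
  classical
  set f : Fin H → (Fin H → S → A) → ℝ :=
    fun h π => ∑ s, w h s * (if π h s = πs h s then (0:ℝ) else 1) with hf
  have hfnn : ∀ h π, 0 ≤ f h π := by
    intro h π
    apply Finset.sum_nonneg
    intro s _
    exact mul_nonneg (hw0 h s) (by split <;> norm_num)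
  -- sum of squared indicator differences
  have key : ∀ (h : Fin H) (π : Fin H → S → A) (s : S),
      ∑ a, ((if π h s = a then (1:ℝ) else 0) - (if πs h s = a then (1:ℝ) else 0)) ^ 2
        = if π h s = πs h s then (0:ℝ) else 2 := by
    intro h π s
    by_cases hc : π h s = πs h s
    · simp [hc]
    · rw [if_neg hc]
      have hterm : ∀ a : A,
          ((if π h s = a then (1:ℝ) else 0) - (if πs h s = a then (1:ℝ) else 0)) ^ 2
            = (if π h s = a then (1:ℝ) else 0) + (if πs h s = a then (1:ℝ) else 0) := by
        intro a
        by_cases h1 : π h s = a <;> by_cases h2 : πs h s = a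
        · exact absurd (h1.trans h2.symm) hc
        all_goals simp [h1, h2]
      rw [Finset.sum_congr rfl (fun a _ => hterm a), Finset.sum_add_distrib]
      simp [Finset.sum_ite_eq]
      norm_num
  -- lower bound for every element of the inf-set
  have hlow : ∀ (h : Fin H) (π : Fin H → S → A), π ∈ Pol → ∀ x ∈ {x : ℝ | ∃ p : S → A → ℝ,
        (∀ s a, 0 < p s a) ∧ (∀ s, ∑ a, p s a = 1) ∧
        x = Pol.sup' hPol (fun π =>
          (∑ s, ∑ a, w h s * ((if π h s = a then (1 : ℝ) else 0)
            - (if πs h s = a then (1 : ℝ) else 0)) ^ 2 / p s a) / D π)},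
      2 * f h π / D π ≤ x := by
    intro h π hπ x hx
    obtain ⟨p, hp0, hp1, rfl⟩ := hx
    have hple : ∀ s a, p s a ≤ 1 := by
      intro s a
      calc p s a ≤ ∑ a, p s a :=
        Finset.single_le_sum (fun a _ => (hp0 s a).le) (Finset.mem_univ a)
      _ = 1 := hp1 s
    refine le_trans ?_ (Finset.le_sup' _ hπ)
    apply div_le_div_of_nonneg_right ?_ (hD π).le
    · -- 2 * f h π ≤ ∑ s ∑ a ...
      have hs : ∀ s : S, 2 * (w h s * (if π h s = πs h s then (0:ℝ) else 1)) ≤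
          ∑ a, w h s * ((if π h s = a then (1:ℝ) else 0)
            - (if πs h s = a then (1:ℝ) else 0)) ^ 2 / p s a := by
        intro s
        have hstep : ∀ a : A, w h s * ((if π h s = a then (1:ℝ) else 0)
              - (if πs h s = a then (1:ℝ) else 0)) ^ 2
            ≤ w h s * ((if π h s = a then (1:ℝ) else 0)
              - (if πs h s = a then (1:ℝ) else 0)) ^ 2 / p s a := by
          intro a
          have hn : 0 ≤ w h s * ((if π h s = a then (1:ℝ) else 0)
              - (if πs h s = a then (1:ℝ) else 0)) ^ 2 :=
            mul_nonneg (hw0 h s) (sq_nonneg _)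
          exact (le_div_iff₀ (hp0 s a)).mpr (by nlinarith [hple s a])
        calc 2 * (w h s * (if π h s = πs h s then (0:ℝ) else 1))
            = ∑ a, w h s * ((if π h s = a then (1:ℝ) else 0)
              - (if πs h s = a then (1:ℝ) else 0)) ^ 2 := by
              rw [← Finset.mul_sum, key h π s]
              by_cases hc : π h s = πs h s <;> simp [hc] <;> ring
          _ ≤ _ := Finset.sum_le_sum (fun a _ => hstep a)
      calc 2 * f h π = ∑ s, 2 * (w h s * (if π h s = πs h s then (0:ℝ) else 1)) := by
            rw [hf, Finset.mul_sum]
        _ ≤ _ := Finset.sum_le_sum (fun s _ => hs s)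
  -- the inf-set is nonempty (uniform distribution)
  have hne : ∀ h : Fin H, ∃ x, x ∈ {x : ℝ | ∃ p : S → A → ℝ,
        (∀ s a, 0 < p s a) ∧ (∀ s, ∑ a, p s a = 1) ∧
        x = Pol.sup' hPol (fun π =>
          (∑ s, ∑ a, w h s * ((if π h s = a then (1 : ℝ) else 0)
            - (if πs h s = a then (1 : ℝ) else 0)) ^ 2 / p s a) / D π)} := by
    intro h
    have hcard : (0:ℝ) < (Fintype.card A : ℝ) := by
      exact_mod_cast Fintype.card_pos
    refine ⟨_, ⟨fun _ _ => (Fintype.card A : ℝ)⁻¹, fun s a => by positivity,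
      fun s => ?_, rfl⟩⟩
    simp [Finset.sum_const, Finset.card_univ]
  -- sInf lower bound
  have hinf : ∀ (h : Fin H) (π : Fin H → S → A), π ∈ Pol →
      2 * f h π / D π ≤ sInf {x : ℝ | ∃ p : S → A → ℝ,
        (∀ s a, 0 < p s a) ∧ (∀ s, ∑ a, p s a = 1) ∧
        x = Pol.sup' hPol (fun π =>
          (∑ s, ∑ a, w h s * ((if π h s = a then (1 : ℝ) else 0)
            - (if πs h s = a then (1 : ℝ) else 0)) ^ 2 / p s a) / D π)} := by
    intro h π hπ
    exact le_csInf (hne h) (hlow h π hπ)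
  -- main bound
  apply Finset.sup'_le
  intro π hπ
  have hg : ∀ h : Fin H, ∑ s, w h s * (Q π h s (π h s) - Q π h s (πs h s)) ^ 2
      ≤ (H:ℝ)^2 * f h π := by
    intro h
    rw [hf, Finset.mul_sum]
    apply Finset.sum_le_sum
    intro s _
    by_cases hc : π h s = πs h s
    · simp [hc]
    · rw [if_neg hc]
      have h1 := hQ π h s (π h s)
      have h2 := hQ π h s (πs h s)
      have : (Q π h s (π h s) - Q π h s (πs h s)) ^ 2 ≤ (H:ℝ)^2 := by nlinarith
      calc w h s * (Q π h s (π h s) - Q π h s (πs h s)) ^ 2 ≤ w h s * (H:ℝ)^2 :=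
        mul_le_mul_of_nonneg_left this (hw0 h s)
      _ = (H:ℝ)^2 * (w h s * 1) := by ring
  have hH1 : (1:ℝ) ≤ (H:ℝ) := by exact_mod_cast hH
  have hsum : ∑ h, 2 * f h π / D π ≤ ∑ h, sInf {x : ℝ | ∃ p : S → A → ℝ,
        (∀ s a, 0 < p s a) ∧ (∀ s, ∑ a, p s a = 1) ∧
        x = Pol.sup' hPol (fun π =>
          (∑ s, ∑ a, w h s * ((if π h s = a then (1 : ℝ) else 0)
            - (if πs h s = a then (1 : ℝ) else 0)) ^ 2 / p s a) / D π)} :=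
    Finset.sum_le_sum (fun h _ => hinf h π hπ)
  calc ((H : ℝ) * ∑ h, ∑ s, w h s * (Q π h s (π h s) - Q π h s (πs h s)) ^ 2) / D π
      ≤ ((H:ℝ) * ∑ h, (H:ℝ)^2 * f h π) / D π := by
        apply div_le_div_of_nonneg_right ?_ (hD π).le
        exact mul_le_mul_of_nonneg_left (Finset.sum_le_sum fun h _ => hg h)
          (by positivity)
    _ ≤ 2 * (H:ℝ)^4 * ∑ h, 2 * f h π / D π := by
        rw [← Finset.sum_div, ← mul_div_assoc, Finset.mul_sum, Finset.mul_sum]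
        apply div_le_div_of_nonneg_right ?_ (hD π).le
        apply Finset.sum_le_sum
        intro i _
        have h0 := hfnn i π
        have h1 : (0:ℝ) ≤ (H:ℝ)^3 * (4*(H:ℝ)-1) :=
          mul_nonneg (by positivity) (by linarith)
        nlinarith [mul_nonneg h0 h1]
    _ ≤ 2 * (H:ℝ)^4 * ∑ h, sInf _ := by
        apply mul_le_mul_of_nonneg_left hsum (by positivity)
end
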